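/- For any fixed point (K*, P*, τ*) = Ψ^T(K*, P*, τ*) there exists a fixed point (K^H, P^H, τ^H) = Ψ^{H,T}(K^H, P^H, τ^H) with (K*, P*, τ*) ≤ (K^H, P^H, τ^H) componentwise. Conversely, for any fixed point (K^H, P^H, τ^H) = Ψ^{H,T}(K^H, P^H, τ^H) there exists a fixed point (K*, P*, τ*) = Ψ^T(K*, P*, τ*) with (K*, P*, τ*) ≤ (K^H, P^H, τ^H) componentwise. -/

import Mathlib

open MeasureTheory

namespace Paper

open Classical in
/-- real-valued indicator of a proposition -/
noncomputable def indR (p : Prop) : ℝ := if p then 1 else 0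

open Classical in
/-- boolean indicator of a proposition -/
noncomputable def indB (p : Prop) : Bool := if p then true else false

/-- The atom of the σ-algebra `m` containing the point `ω`:
the intersection of all `m`-measurable sets containing `ω`. -/
def atomOf {Ω : Type*} (m : MeasurableSpace Ω) (ω : Ω) : Set Ω :=
  ⋂₀ {s : Set Ω | MeasurableSet[m] s ∧ ω ∈ s}

/-- The set `S`, with the order induced from the ambient preorder, is a nonempty complete
lattice: it has a greatest and a least element and every subset of `S` has a least upper
bound and a greatest lower bound within `S`. -/
def LatticeStructure {X : Type*} [Preorder X] (S : Set X) : Prop :=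
  S.Nonempty ∧
  (∃ top ∈ S, ∀ z ∈ S, z ≤ top) ∧
  (∃ bot ∈ S, ∀ z ∈ S, bot ≤ z) ∧
  (∀ A ⊆ S,
    (∃ u ∈ S, (∀ a ∈ A, a ≤ u) ∧ ∀ w ∈ S, (∀ a ∈ A, a ≤ w) → u ≤ w) ∧
    (∃ v ∈ S, (∀ a ∈ A, v ≤ a) ∧ ∀ w ∈ S, (∀ a ∈ A, w ≤ a) → w ≤ v))

/-- The space of triples `(K, P, τ)`: capital process, survival-probability process,
default-time vector, with the componentwise (pointwise) order. -/
abbrev Tri (Ω : Type*) (n ℓ : ℕ) :=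
  (Fin (ℓ+1) → Ω → Fin n → ℝ) × (Fin (ℓ+1) → Ω → Fin n → ℝ) × (Fin n → Ω → ℝ)

/-- Data of the single-maturity interbank model. -/
structure SM (Ω : Type*) (n ℓ : ℕ) where
  /-- maturity -/
  T : ℝ
  /-- times `0 = t 0 < t 1 < ... < t ℓ = T` -/
  t : Fin (ℓ+1) → ℝ
  /-- external asset process -/
  x : Fin (ℓ+1) → Ω → Fin n → ℝ
  /-- interbank liabilities -/
  L : Fin n → Fin n → ℝ
  /-- external liabilities -/
  L0 : Fin n → ℝ
  /-- recovery rate -/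
  β : ℝ
  /-- risk-free rate -/
  r : ℝ

namespace SM

variable {Ω : Type*} {n ℓ : ℕ}

/-- total liabilities `p̄_i` -/
noncomputable def pbar (M : SM Ω n ℓ) (i : Fin n) : ℝ := (∑ j, M.L i j) + M.L0 i

/-- discount factor `e^{-r (T - t l)}` -/
noncomputable def disc (M : SM Ω n ℓ) (l : Fin (ℓ+1)) : ℝ :=
  Real.exp (-(M.r * (M.T - M.t l)))

/-- the capital component `Ψ^T_K` of the clearing map -/
noncomputable def ΨK (M : SM Ω n ℓ) (l : Fin (ℓ+1)) (Pt : Ω → Fin n → ℝ)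
    (ω : Ω) (i : Fin n) : ℝ :=
  M.x l ω i + M.disc l * (∑ j, M.L j i * (M.β + (1 - M.β) * Pt ω j))
    - M.disc l * M.pbar i

/-- the default-time component `Ψ^T_τ` of the clearing map: the first time `t l` at which
the capital of bank `i` is negative, and `T + 1` if the capital stays nonnegative -/
noncomputable def Ψτ (M : SM Ω n ℓ) (K : Fin (ℓ+1) → Ω → Fin n → ℝ)
    (i : Fin n) (ω : Ω) : ℝ :=
  sInf (insert (M.T + 1) ((fun l => M.t l) '' {l : Fin (ℓ+1) | K l ω i < 0}))

/-- the survival-probability component `Ψ^T_P` of the clearing map: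
`ℙ(τ_i > T | 𝓕 l)` -/
noncomputable def ΨP [MeasurableSpace Ω] (M : SM Ω n ℓ)
    (𝓕 : Fin (ℓ+1) → MeasurableSpace Ω) (μ : Measure Ω)
    (τ : Fin n → Ω → ℝ) (l : Fin (ℓ+1)) (ω : Ω) (i : Fin n) : ℝ :=
  (μ[fun ω' => indR (M.T < τ i ω') | 𝓕 l]) ω

/-- membership in the domain `𝔻^T`: adaptedness, the balance-sheet bounds on `K`,
`P` valued in `[0,1]`, and `τ` valued in `{t_0, ..., t_ℓ, T+1}` -/
def memD [MeasurableSpace Ω] (M : SM Ω n ℓ) (𝓕 : Fin (ℓ+1) → MeasurableSpace Ω)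
    (K P : Fin (ℓ+1) → Ω → Fin n → ℝ) (τ : Fin n → Ω → ℝ) : Prop :=
  (∀ l i, Measurable[𝓕 l] fun ω => K l ω i) ∧
  (∀ l i, Measurable[𝓕 l] fun ω => P l ω i) ∧
  (∀ l ω i, M.x l ω i - M.disc l * M.pbar i ≤ K l ω i) ∧
  (∀ l ω i, K l ω i ≤ M.x l ω i + M.disc l * ((∑ j, M.L j i) - M.pbar i)) ∧
  (∀ l ω i, 0 ≤ P l ω i ∧ P l ω i ≤ 1) ∧
  (∀ i ω, (∃ l, τ i ω = M.t l) ∨ τ i ω = M.T + 1)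

/-- the clearing map `Ψ^T` -/
noncomputable def Ψmap [MeasurableSpace Ω] (M : SM Ω n ℓ)
    (𝓕 : Fin (ℓ+1) → MeasurableSpace Ω) (μ : Measure Ω) (z : Tri Ω n ℓ) : Tri Ω n ℓ :=
  (fun l ω i => M.ΨK l (z.2.1 l) ω i,
   fun l ω i => M.ΨP 𝓕 μ z.2.2 l ω i,
   fun i ω => M.Ψτ z.1 i ω)

/-- the set of clearing solutions: fixed points of `Ψ^T` in `𝔻^T` -/
def clearingSet [MeasurableSpace Ω] (M : SM Ω n ℓ)
    (𝓕 : Fin (ℓ+1) → MeasurableSpace Ω) (μ : Measure Ω) : Set (Tri Ω n ℓ) :=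
  {z | M.memD 𝓕 z.1 z.2.1 z.2.2 ∧ M.Ψmap 𝓕 μ z = z}

/-- Standing assumptions of the single-maturity model. -/
structure Valid [MeasurableSpace Ω] (M : SM Ω n ℓ)
    (𝓕 : Fin (ℓ+1) → MeasurableSpace Ω) (μ : Measure Ω) : Prop where
  hn : 1 ≤ n
  hTop : (inferInstance : MeasurableSpace Ω) = ⊤
  hprob : IsProbabilityMeasure μ
  hpos : ∀ ω : Ω, 0 < μ {ω}
  hmono : Monotone 𝓕
  h0 : 𝓕 0 = ⊥
  hlast : 𝓕 (Fin.last ℓ) = (inferInstance : MeasurableSpace Ω)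
  ht : StrictMono M.t
  ht0 : M.t 0 = 0
  htT : M.t (Fin.last ℓ) = M.T
  hx : ∀ l i, Measurable[𝓕 l] fun ω => M.x l ω i
  hx0 : ∀ l ω i, 0 ≤ M.x l ω i
  hL : ∀ i j, 0 ≤ M.L i j
  hLd : ∀ i, M.L i i = 0
  hL0 : ∀ i, 0 ≤ M.L0 i
  hβ0 : 0 ≤ M.β
  hβ1 : M.β ≤ 1
  hr : 0 ≤ M.r

end SM

namespace SM

/-- the historical-price-accounting survival component `Ψ^{H,T}_P`: the indicator `1{τ_i > t_l}` -/
noncomputable def ΨPH (M : SM Ω n ℓ) (τ : Fin n → Ω → ℝ) (l : Fin (ℓ+1))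
    (ω : Ω) (i : Fin n) : ℝ :=
  indR (M.t l < τ i ω)

/-- the historical price accounting clearing map `Ψ^{H,T}` -/
noncomputable def ΨmapH (M : SM Ω n ℓ) (z : Tri Ω n ℓ) : Tri Ω n ℓ :=
  (fun l ω i => M.ΨK l (z.2.1 l) ω i,
   fun l ω i => M.ΨPH z.2.2 l ω i,
   fun i ω => M.Ψτ z.1 i ω)

/-- the set of historical price accounting clearing solutions: fixed points of `Ψ^{H,T}` in `𝔻^T` -/
def clearingSetH [MeasurableSpace Ω] (M : SM Ω n ℓ)
    (𝓕 : Fin (ℓ+1) → MeasurableSpace Ω) : Set (Tri Ω n ℓ) :=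
  {z | M.memD 𝓕 z.1 z.2.1 z.2.2 ∧ M.ΨmapH z = z}

end SM

/-! The mark-to-market and the historical price accounting clearing maps are monotone and differ
only in the survival component. Since a default time `τ = Ψ_τ(K)` built from an adapted capital
process is a stopping time, `1{τ > t}` is `𝓕_t`-measurable and dominates `ℙ(τ > T | 𝓕_t)`; hence
`Ψ^T ≤ Ψ^{H,T}` at every fixed point of either map. A fixed point `z` of `Ψ^T` is therefore a
post-fixed point of `Ψ^{H,T}`, and a fixed point `z^H` of `Ψ^{H,T}` a pre-fixed point of `Ψ^T`,
and Knaster–Tarski on the order intervals `[z, upper bound of 𝔻^T]` and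
`[lower bound of 𝔻^T, z^H]` produces the required fixed points.

Fixed points of `Ψ^T` are automatically adapted, but fixed points of `Ψ^{H,T}` need not be. In the
first direction we therefore run Knaster–Tarski inside the set of adapted triples, which is
preserved by `Ψ^{H,T}` and, `Ω` being finite, closed under infima. -/

instance Prod.instConditionallyCompleteLattice {α β : Type*} [ConditionallyCompleteLattice α]
    [ConditionallyCompleteLattice β] : ConditionallyCompleteLattice (α × β) where
  isLUB_csSup _ hne hbdd := isLUB_prod.mpr
    ⟨isLUB_csSup (hne.image _) (monotone_fst.map_bddAbove hbdd),
      isLUB_csSup (hne.image _) (monotone_snd.map_bddAbove hbdd)⟩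
  isGLB_csInf _ hne hbdd := isGLB_prod.mpr
    ⟨isGLB_csInf (hne.image _) (monotone_fst.map_bddBelow hbdd),
      isGLB_csInf (hne.image _) (monotone_snd.map_bddBelow hbdd)⟩

/-- Knaster–Tarski relative to a set `A` closed under infima: the fixed point is the least
pre-fixed point in `A` above `a`. -/
theorem exists_fixedPoint_mem_Icc_of_sInf_mem {α : Type*} [ConditionallyCompleteLattice α]
    {f : α → α} (hf : Monotone f) {A : Set α} (hfA : Set.MapsTo f A A)
    (hA : ∀ s ⊆ A, s.Nonempty → BddBelow s → sInf s ∈ A) {a b : α} (hab : a ≤ b)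
    (ha : a ≤ f a) (hb : f b ≤ b) (hbA : b ∈ A) :
    ∃ w ∈ A, a ≤ w ∧ w ≤ b ∧ f w = w := by
  set S := {w ∈ A | a ≤ w ∧ f w ≤ w}
  have hbS : b ∈ S := ⟨hbA, hab, hb⟩
  have hbdd : BddBelow S := ⟨a, fun _ hw => hw.2.1⟩
  have hwA : sInf S ∈ A := hA S (fun _ hw => hw.1) ⟨b, hbS⟩ hbdd
  have haw : a ≤ sInf S := le_csInf ⟨b, hbS⟩ fun _ hw => hw.2.1
  have hfw : f (sInf S) ≤ sInf S :=
    le_csInf ⟨b, hbS⟩ fun _ hw => (hf (csInf_le hbdd hw)).trans hw.2.2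
  have hfwS : f (sInf S) ∈ S := ⟨hfA hwA, ha.trans (hf haw), hf hfw⟩
  exact ⟨sInf S, hwA, haw, csInf_le hbdd hbS, hfw.antisymm (csInf_le hbdd hfwS)⟩

section Atoms

variable {Ω : Type*} [Finite Ω] {m : MeasurableSpace Ω}

lemma measurableSet_atomOf (ω : Ω) : MeasurableSet[m] (atomOf m ω) :=
  .sInter (Set.toFinite _).countable fun _ hs => hs.1

lemma measurable_iff_forall_mem_atomOf {β : Type*} [MeasurableSpace β]
    [MeasurableSingletonClass β] {f : Ω → β} :
    Measurable[m] f ↔ ∀ ω, ∀ ω' ∈ atomOf m ω, f ω' = f ω := by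
  refine ⟨fun hf ω ω' hω' => hω' _ ⟨hf (measurableSet_singleton (f ω)), rfl⟩, fun h s _ => ?_⟩
  have hunion : f ⁻¹' s = ⋃ ω ∈ f ⁻¹' s, atomOf m ω := by
    refine subset_antisymm (fun ω hω => Set.mem_biUnion hω fun _ hs => hs.2) ?_
    simp only [Set.iUnion_subset_iff]
    exact fun ω hω ω' hω' => by simpa [Set.mem_preimage, h ω ω' hω'] using hω
  rw [hunion]
  exact .biUnion (Set.to_countable _) fun ω _ => measurableSet_atomOf ω

lemma measurable_sInf_image {ι β : Type*} [InfSet β] [MeasurableSpace β]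
    [MeasurableSingletonClass β] {S : Set ι} {g : ι → Ω → β}
    (hg : ∀ i ∈ S, Measurable[m] (g i)) : Measurable[m] fun ω => sInf ((g · ω) '' S) :=
  measurable_iff_forall_mem_atomOf.mpr fun ω ω' hω' => by
    rw [Set.image_congr fun i hi => measurable_iff_forall_mem_atomOf.mp (hg i hi) ω ω' hω']

lemma measurableSet_biInter_of_finite {ι : Type*} {S : Set ι} {s : ι → Set Ω}
    (hs : ∀ i ∈ S, MeasurableSet[m] (s i)) : MeasurableSet[m] (⋂ i ∈ S, s i) := by
  rw [← Set.sInter_image]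
  exact .sInter (Set.toFinite _).countable (Set.forall_mem_image.mpr hs)

end Atoms

lemma indR_nonneg (p : Prop) : 0 ≤ indR p := by
  unfold indR; split_ifs <;> norm_num

lemma indR_le_one (p : Prop) : indR p ≤ 1 := by
  unfold indR; split_ifs <;> norm_num

lemma indR_mono {p q : Prop} (h : p → q) : indR p ≤ indR q := by
  unfold indR; split_ifs <;> simp_all

lemma measurable_indR {Ω : Type*} {m : MeasurableSpace Ω} {p : Ω → Prop}
    (hp : MeasurableSet[m] {ω | p ω}) : Measurable[m] fun ω => indR (p ω) := by
  classical
  have h : (fun ω => indR (p ω)) = Set.indicator {ω | p ω} 1 := by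
    funext ω; by_cases hω : p ω <;> simp [indR, hω]
  rw [h]
  exact measurable_const.indicator hp

lemma tri_sInf_fst_apply {Ω : Type*} {n ℓ : ℕ} (S : Set (Tri Ω n ℓ)) (l : Fin (ℓ+1)) (ω : Ω)
    (i : Fin n) : (sInf S).1 l ω i = sInf ((fun w : Tri Ω n ℓ => w.1 l ω i) '' S) := by
  simp only [Prod.fst_sInf, sInf_apply_eq_sInf_image, Set.image_image, Function.eval]

lemma tri_sInf_snd_fst_apply {Ω : Type*} {n ℓ : ℕ} (S : Set (Tri Ω n ℓ)) (l : Fin (ℓ+1))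
    (ω : Ω) (i : Fin n) :
    (sInf S).2.1 l ω i = sInf ((fun w : Tri Ω n ℓ => w.2.1 l ω i) '' S) := by
  simp only [Prod.snd_sInf, Prod.fst_sInf, sInf_apply_eq_sInf_image, Set.image_image,
    Function.eval]

lemma tri_sInf_snd_snd_apply {Ω : Type*} {n ℓ : ℕ} (S : Set (Tri Ω n ℓ)) (i : Fin n) (ω : Ω) :
    (sInf S).2.2 i ω = sInf ((fun w : Tri Ω n ℓ => w.2.2 i ω) '' S) := by
  simp only [Prod.snd_sInf, sInf_apply_eq_sInf_image, Set.image_image, Function.eval]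

namespace SM

variable {Ω : Type*} {n ℓ : ℕ} {M : SM Ω n ℓ}

/-- The componentwise lower bound of `𝔻^T`. -/
noncomputable def lowerTri (M : SM Ω n ℓ) : Tri Ω n ℓ :=
  (fun l ω i => M.x l ω i - M.disc l * M.pbar i, fun _ _ _ => 0, fun _ _ => M.t 0)

/-- The componentwise upper bound of `𝔻^T`. -/
noncomputable def upperTri (M : SM Ω n ℓ) : Tri Ω n ℓ :=
  (fun l ω i => M.x l ω i + M.disc l * ((∑ j, M.L j i) - M.pbar i), fun _ _ _ => 1,
    fun _ _ => M.T + 1)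

def IsStopping (M : SM Ω n ℓ) (𝓕 : Fin (ℓ+1) → MeasurableSpace Ω) (τ : Fin n → Ω → ℝ) :
    Prop :=
  ∀ l i, MeasurableSet[𝓕 l] {ω | M.t l < τ i ω}

structure Admissible (M : SM Ω n ℓ) (𝓕 : Fin (ℓ+1) → MeasurableSpace Ω) (w : Tri Ω n ℓ) :
    Prop where
  measurable_K : ∀ l i, Measurable[𝓕 l] fun ω => w.1 l ω i
  measurable_P : ∀ l i, Measurable[𝓕 l] fun ω => w.2.1 l ω i
  isStopping : M.IsStopping 𝓕 w.2.2
  mem_grid : ∀ i ω, (∃ l, w.2.2 i ω = M.t l) ∨ w.2.2 i ω = M.T + 1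

lemma disc_pos (M : SM Ω n ℓ) (l : Fin (ℓ+1)) : 0 < M.disc l := Real.exp_pos _

lemma finite_Ψτ_set (M : SM Ω n ℓ) (K : Fin (ℓ+1) → Ω → Fin n → ℝ) (i : Fin n) (ω : Ω) :
    (insert (M.T + 1) ((fun l => M.t l) '' {l | K l ω i < 0})).Finite :=
  ((Set.toFinite _).image _).insert _

lemma Ψτ_mem_grid (K : Fin (ℓ+1) → Ω → Fin n → ℝ) (i : Fin n) (ω : Ω) :
    (∃ l, M.Ψτ K i ω = M.t l) ∨ M.Ψτ K i ω = M.T + 1 := by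
  rcases (Set.insert_nonempty _ _).csInf_mem (M.finite_Ψτ_set K i ω) with h | ⟨l, -, h⟩
  exacts [Or.inr h, Or.inl ⟨l, h.symm⟩]

lemma Ψτ_mono {K K' : Fin (ℓ+1) → Ω → Fin n → ℝ} (h : K ≤ K') (i : Fin n) (ω : Ω) :
    M.Ψτ K i ω ≤ M.Ψτ K' i ω :=
  csInf_le_csInf (M.finite_Ψτ_set K i ω).bddBelow (Set.insert_nonempty _ _)
    (Set.insert_subset_insert (Set.image_mono fun l hl => (h l ω i).trans_lt hl))

lemma admissible_sInf [Finite Ω] {𝓕 : Fin (ℓ+1) → MeasurableSpace Ω} {S : Set (Tri Ω n ℓ)}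
    (hS : ∀ w ∈ S, M.Admissible 𝓕 w) (hne : S.Nonempty) : M.Admissible 𝓕 (sInf S) := by
  have hfin : ∀ i ω, ((fun w : Tri Ω n ℓ => w.2.2 i ω) '' S).Finite := fun i ω =>
    ((Set.finite_range M.t).insert (M.T + 1)).subset <| by
      rintro _ ⟨w, hw, rfl⟩
      rcases (hS w hw).mem_grid i ω with ⟨l, h⟩ | h
      exacts [Or.inr ⟨l, h.symm⟩, Or.inl h]
  refine ⟨fun l i => ?_, fun l i => ?_, fun l i => ?_, fun i ω => ?_⟩
  · simp_rw [tri_sInf_fst_apply]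
    exact measurable_sInf_image fun w hw => (hS w hw).measurable_K l i
  · simp_rw [tri_sInf_snd_fst_apply]
    exact measurable_sInf_image fun w hw => (hS w hw).measurable_P l i
  · have hset : {ω | M.t l < (sInf S).2.2 i ω} = ⋂ w ∈ S, {ω | M.t l < w.2.2 i ω} := by
      ext ω
      simp only [Set.mem_ofPred_eq, Set.mem_iInter, tri_sInf_snd_snd_apply,
        (hfin i ω).lt_csInf_iff (hne.image _), Set.forall_mem_image]
    rw [hset]
    exact measurableSet_biInter_of_finite fun w hw => (hS w hw).isStopping l i
  · obtain ⟨w, hw, h⟩ := (hne.image _).csInf_mem (hfin i ω)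
    rw [tri_sInf_snd_snd_apply, ← h]
    exact (hS w hw).mem_grid i ω

section Valid

variable [MeasurableSpace Ω] {𝓕 : Fin (ℓ+1) → MeasurableSpace Ω} {μ : Measure Ω}

lemma Valid.t_le (hM : M.Valid 𝓕 μ) (l : Fin (ℓ+1)) : M.t l ≤ M.T :=
  hM.htT ▸ hM.ht.monotone (Fin.le_last l)

lemma Valid.t_lt (hM : M.Valid 𝓕 μ) (l : Fin (ℓ+1)) : M.t l < M.T + 1 :=
  (hM.t_le l).trans_lt (lt_add_one _)

lemma Valid.mem_Icc_of_mem_grid (hM : M.Valid 𝓕 μ) {s : ℝ}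
    (hs : (∃ l, s = M.t l) ∨ s = M.T + 1) : s ∈ Set.Icc (M.t 0) (M.T + 1) := by
  rcases hs with ⟨l, rfl⟩ | rfl
  · exact ⟨hM.ht.monotone (Fin.zero_le l), (hM.t_lt l).le⟩
  · exact ⟨(hM.t_lt 0).le, le_rfl⟩

lemma Valid.lt_Ψτ_iff (hM : M.Valid 𝓕 μ) {K : Fin (ℓ+1) → Ω → Fin n → ℝ} {l : Fin (ℓ+1)}
    {i : Fin n} {ω : Ω} : M.t l < M.Ψτ K i ω ↔ ∀ k ≤ l, 0 ≤ K k ω i := by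
  rw [SM.Ψτ, (M.finite_Ψτ_set K i ω).lt_csInf_iff (Set.insert_nonempty _ _)]
  simp only [Set.forall_mem_insert, Set.forall_mem_image, Set.mem_ofPred_eq, hM.ht.lt_iff_lt,
    hM.t_lt l, true_and]
  exact forall_congr' fun k =>
    ⟨fun h hk => not_lt.mp fun hneg => (h hneg).not_ge hk,
      fun h hneg => not_le.mp fun hk => (h hk).not_gt hneg⟩

lemma Valid.isStopping_Ψτ (hM : M.Valid 𝓕 μ) {K : Fin (ℓ+1) → Ω → Fin n → ℝ}
    (hK : ∀ l i, Measurable[𝓕 l] fun ω => K l ω i) :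
    M.IsStopping 𝓕 fun i ω => M.Ψτ K i ω := by
  intro l i
  have hset :
      {ω | M.t l < M.Ψτ K i ω} = ⋂ k, ⋂ (_ : k ≤ l), (fun ω => K k ω i) ⁻¹' Set.Ici 0 := by
    ext ω
    simp [hM.lt_Ψτ_iff]
  rw [hset]
  exact .iInter fun k => .iInter fun hk => hM.hmono hk _ (hK k i measurableSet_Ici)

lemma Valid.ΨK_mono (hM : M.Valid 𝓕 μ) {l : Fin (ℓ+1)} {P P' : Ω → Fin n → ℝ} (h : P ≤ P')
    (ω : Ω) (i : Fin n) : M.ΨK l P ω i ≤ M.ΨK l P' ω i := by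
  have hβ : 0 ≤ 1 - M.β := sub_nonneg.mpr hM.hβ1
  unfold SM.ΨK
  gcongr with j
  · exact (M.disc_pos l).le
  · exact hM.hL j i
  · exact h ω j

lemma Valid.ΨK_mem_Icc (hM : M.Valid 𝓕 μ) {l : Fin (ℓ+1)} {P : Ω → Fin n → ℝ}
    (hP : ∀ ω j, P ω j ∈ Set.Icc 0 1) (ω : Ω) (i : Fin n) :
    M.ΨK l P ω i ∈ Set.Icc (M.lowerTri.1 l ω i) (M.upperTri.1 l ω i) := by
  have hβ : 0 ≤ 1 - M.β := sub_nonneg.mpr hM.hβ1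
  have hsum : (∑ j, M.L j i * (M.β + (1 - M.β) * P ω j)) ∈ Set.Icc 0 (∑ j, M.L j i) := by
    refine ⟨Finset.sum_nonneg fun j _ => ?_, Finset.sum_le_sum fun j _ => ?_⟩
    · exact mul_nonneg (hM.hL j i) (add_nonneg hM.hβ0 (mul_nonneg hβ (hP ω j).1))
    · exact mul_le_of_le_one_right (hM.hL j i) (by nlinarith [(hP ω j).2])
  have hdisc := M.disc_pos l
  simp only [SM.ΨK, lowerTri, upperTri, Set.mem_Icc]
  constructor <;> nlinarith [hsum.1, hsum.2]

lemma Valid.measurable_ΨK (hM : M.Valid 𝓕 μ) {l : Fin (ℓ+1)} {P : Ω → Fin n → ℝ}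
    (hP : ∀ j, Measurable[𝓕 l] fun ω => P ω j) (i : Fin n) :
    Measurable[𝓕 l] fun ω => M.ΨK l P ω i := by
  have hx := hM.hx l i
  unfold SM.ΨK
  fun_prop

lemma Valid.ΨmapH_mono (hM : M.Valid 𝓕 μ) : Monotone M.ΨmapH :=
  fun _ _ ⟨hK, hP, hτ⟩ =>
    ⟨fun l ω i => hM.ΨK_mono (hP l) ω i,
      fun _ ω i => indR_mono fun h => h.trans_le (hτ i ω), fun i ω => Ψτ_mono hK i ω⟩

lemma Valid.ΨmapH_upperTri_le (hM : M.Valid 𝓕 μ) : M.ΨmapH M.upperTri ≤ M.upperTri :=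
  ⟨fun _ ω i => (hM.ΨK_mem_Icc (fun _ _ => ⟨zero_le_one, le_rfl⟩) ω i).2,
    fun _ _ _ => indR_le_one _, fun i ω => (hM.mem_Icc_of_mem_grid (Ψτ_mem_grid _ i ω)).2⟩

lemma Valid.mem_Icc_of_memD (hM : M.Valid 𝓕 μ) {w : Tri Ω n ℓ}
    (hw : M.memD 𝓕 w.1 w.2.1 w.2.2) : w ∈ Set.Icc M.lowerTri M.upperTri :=
  ⟨⟨hw.2.2.1, fun l ω i => (hw.2.2.2.2.1 l ω i).1,
      fun i ω => (hM.mem_Icc_of_mem_grid (hw.2.2.2.2.2 i ω)).1⟩,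
    ⟨hw.2.2.2.1, fun l ω i => (hw.2.2.2.2.1 l ω i).2,
      fun i ω => (hM.mem_Icc_of_mem_grid (hw.2.2.2.2.2 i ω)).2⟩⟩

lemma memD_of_mem_Icc {w : Tri Ω n ℓ} (hw : w ∈ Set.Icc M.lowerTri M.upperTri)
    (hK : ∀ l i, Measurable[𝓕 l] fun ω => w.1 l ω i)
    (hP : ∀ l i, Measurable[𝓕 l] fun ω => w.2.1 l ω i)
    (hτ : ∀ i ω, (∃ l, w.2.2 i ω = M.t l) ∨ w.2.2 i ω = M.T + 1) :
    M.memD 𝓕 w.1 w.2.1 w.2.2 :=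
  ⟨hK, hP, hw.1.1, hw.2.1, fun l ω i => ⟨hw.1.2.1 l ω i, hw.2.2.1 l ω i⟩, hτ⟩

lemma Valid.isStopping_of_Ψτ_eq (hM : M.Valid 𝓕 μ) {w : Tri Ω n ℓ}
    (hK : ∀ l i, Measurable[𝓕 l] fun ω => w.1 l ω i) (hτ : (fun i ω => M.Ψτ w.1 i ω) = w.2.2) :
    M.IsStopping 𝓕 w.2.2 :=
  hτ ▸ hM.isStopping_Ψτ hK

lemma admissible_upperTri (hM : M.Valid 𝓕 μ) : M.Admissible 𝓕 M.upperTri where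
  measurable_K l i := (hM.hx l i).add_const _
  measurable_P _ _ := measurable_const
  isStopping l i := by simp [upperTri, hM.t_lt l]
  mem_grid _ _ := Or.inr rfl

lemma Admissible.ΨmapH (hM : M.Valid 𝓕 μ) {w : Tri Ω n ℓ} (hw : M.Admissible 𝓕 w) :
    M.Admissible 𝓕 (M.ΨmapH w) where
  measurable_K l := hM.measurable_ΨK (hw.measurable_P l)
  measurable_P l i := measurable_indR (hw.isStopping l i)
  isStopping := hM.isStopping_Ψτ hw.measurable_K
  mem_grid := Ψτ_mem_grid _

lemma Valid.memD_of_Ψmap_eq (hM : M.Valid 𝓕 μ) {w : Tri Ω n ℓ}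
    (hw : w ∈ Set.Icc M.lowerTri M.upperTri) (hfix : M.Ψmap 𝓕 μ w = w) :
    M.memD 𝓕 w.1 w.2.1 w.2.2 := by
  have hK : (fun l ω i => M.ΨK l (w.2.1 l) ω i) = w.1 := congrArg (·.1) hfix
  have hP : (fun l ω i => M.ΨP 𝓕 μ w.2.2 l ω i) = w.2.1 := congrArg (·.2.1) hfix
  have hτ : (fun i ω => M.Ψτ w.1 i ω) = w.2.2 := congrArg (·.2.2) hfix
  have hPm : ∀ l i, Measurable[𝓕 l] fun ω => w.2.1 l ω i :=
    hP ▸ fun _ _ => stronglyMeasurable_condExp.measurable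
  exact memD_of_mem_Icc hw (hK ▸ fun l => hM.measurable_ΨK (hPm l)) hPm
    (hτ ▸ Ψτ_mem_grid w.1)

end Valid

section Finite

variable [Finite Ω] [MeasurableSpace Ω] {𝓕 : Fin (ℓ+1) → MeasurableSpace Ω} {μ : Measure Ω}

lemma Valid.integrable (hM : M.Valid 𝓕 μ) (f : Ω → ℝ) : Integrable f μ := by
  have : MeasurableSingletonClass Ω := ⟨fun a => by
    have h : MeasurableSet[⊤] {a} := trivial
    rwa [← hM.hTop] at h⟩
  have := hM.hprob
  exact .of_finite

lemma Valid.forall_of_ae (hM : M.Valid 𝓕 μ) {p : Ω → Prop} (h : ∀ᵐ ω ∂μ, p ω) (ω : Ω) : p ω :=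
  ae_iff_of_countable.mp h ω (hM.hpos ω).ne'

lemma Valid.ΨP_mono (hM : M.Valid 𝓕 μ) {τ τ' : Fin n → Ω → ℝ} (h : τ ≤ τ') (l : Fin (ℓ+1))
    (ω : Ω) (i : Fin n) : M.ΨP 𝓕 μ τ l ω i ≤ M.ΨP 𝓕 μ τ' l ω i :=
  hM.forall_of_ae (condExp_mono (hM.integrable _) (hM.integrable _)
    (.of_forall fun ω' => indR_mono fun hT => hT.trans_le (h i ω'))) ω

lemma Valid.ΨP_nonneg (hM : M.Valid 𝓕 μ) (τ : Fin n → Ω → ℝ) (l : Fin (ℓ+1)) (ω : Ω)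
    (i : Fin n) : 0 ≤ M.ΨP 𝓕 μ τ l ω i :=
  hM.forall_of_ae (condExp_nonneg (.of_forall fun _ => indR_nonneg _)) ω

/-- `{τ > T} ⊆ {τ > t_l}`, and conditioning on `𝓕_l` fixes the `𝓕_l`-measurable
`1{τ > t_l}`. -/
lemma Valid.ΨP_le_ΨPH (hM : M.Valid 𝓕 μ) {τ : Fin n → Ω → ℝ} (hτ : M.IsStopping 𝓕 τ)
    (l : Fin (ℓ+1)) (ω : Ω) (i : Fin n) : M.ΨP 𝓕 μ τ l ω i ≤ M.ΨPH τ l ω i := by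
  have := hM.hprob
  have hcond : μ[fun ω' => indR (M.t l < τ i ω') | 𝓕 l] = fun ω' => indR (M.t l < τ i ω') :=
    condExp_of_stronglyMeasurable (le_top.trans_eq hM.hTop.symm)
      (measurable_indR (hτ l i)).stronglyMeasurable (hM.integrable _)
  have hmono := condExp_mono (m := 𝓕 l) (hM.integrable fun ω' => indR (M.T < τ i ω'))
    (hM.integrable _) (.of_forall fun ω' => indR_mono ((hM.t_le l).trans_lt))
  rw [hcond] at hmono
  exact hM.forall_of_ae hmono ω

lemma Valid.Ψmap_mono (hM : M.Valid 𝓕 μ) : Monotone (M.Ψmap 𝓕 μ) :=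
  fun _ _ ⟨hK, hP, hτ⟩ =>
    ⟨fun l ω i => hM.ΨK_mono (hP l) ω i, fun l ω i => hM.ΨP_mono hτ l ω i,
      fun i ω => Ψτ_mono hK i ω⟩

lemma Valid.Ψmap_le_ΨmapH (hM : M.Valid 𝓕 μ) {w : Tri Ω n ℓ} (hτ : M.IsStopping 𝓕 w.2.2) :
    M.Ψmap 𝓕 μ w ≤ M.ΨmapH w :=
  ⟨fun _ _ _ => le_rfl, fun l ω i => hM.ΨP_le_ΨPH hτ l ω i, fun _ _ => le_rfl⟩

lemma Valid.lowerTri_le_Ψmap_lowerTri (hM : M.Valid 𝓕 μ) :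
    M.lowerTri ≤ M.Ψmap 𝓕 μ M.lowerTri :=
  ⟨fun _ ω i => (hM.ΨK_mem_Icc (fun _ _ => ⟨le_rfl, zero_le_one⟩) ω i).1,
    fun l ω i => hM.ΨP_nonneg _ l ω i,
    fun i ω => (hM.mem_Icc_of_mem_grid (Ψτ_mem_grid _ i ω)).1⟩

end Finite

end SM

open SM in
/-- Lemma B.2: every mark-to-market clearing solution is dominated by some
historical price accounting clearing solution, and every historical price accounting clearing
solution dominates some mark-to-market clearing solution (componentwise order on `𝔻^T`). -/
theorem mtm_hpa_comparison
    {Ω : Type*} [Fintype Ω] [MeasurableSpace Ω] {n ℓ : ℕ}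
    (M : SM Ω n ℓ) (𝓕 : Fin (ℓ+1) → MeasurableSpace Ω) (μ : MeasureTheory.Measure Ω)
    (hM : M.Valid 𝓕 μ) :
    (∀ z ∈ M.clearingSet 𝓕 μ, ∃ zH ∈ M.clearingSetH 𝓕, z ≤ zH) ∧
    (∀ zH ∈ M.clearingSetH 𝓕, ∃ z ∈ M.clearingSet 𝓕 μ, z ≤ zH) := by
  refine ⟨fun z ⟨hzD, hfix⟩ => ?_, fun zH ⟨hzD, hfix⟩ => ?_⟩
  · obtain ⟨hlow, hup⟩ := hM.mem_Icc_of_memD hzD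
    have hstop : M.IsStopping 𝓕 z.2.2 := hM.isStopping_of_Ψτ_eq hzD.1 (congrArg (·.2.2) hfix)
    obtain ⟨w, hwA, hzw, hwu, hw⟩ := exists_fixedPoint_mem_Icc_of_sInf_mem hM.ΨmapH_mono
      (fun _ h => h.ΨmapH hM) (fun _ hS hne _ => admissible_sInf hS hne) hup
      (hfix.ge.trans (hM.Ψmap_le_ΨmapH hstop)) hM.ΨmapH_upperTri_le (admissible_upperTri hM)
    exact ⟨w, ⟨memD_of_mem_Icc ⟨hlow.trans hzw, hwu⟩ hwA.measurable_K hwA.measurable_P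
      hwA.mem_grid, hw⟩, hzw⟩
  · obtain ⟨hlow, hup⟩ := hM.mem_Icc_of_memD hzD
    have hstop : M.IsStopping 𝓕 zH.2.2 := hM.isStopping_of_Ψτ_eq hzD.1 (congrArg (·.2.2) hfix)
    obtain ⟨w, -, hlw, hwz, hw⟩ := exists_fixedPoint_mem_Icc_of_sInf_mem hM.Ψmap_mono
      (Set.mapsTo_univ _ _) (fun _ _ _ _ => trivial) hlow hM.lowerTri_le_Ψmap_lowerTri
      ((hM.Ψmap_le_ΨmapH hstop).trans hfix.le) trivial
    exact ⟨w, ⟨hM.memD_of_Ψmap_eq ⟨hlw, hwz.trans hup⟩ hw, hw⟩, hwz⟩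

end Paper
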